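/- The map (ξ,η) ↦ ((c_I/(R-a))(ξ-a) + ξ cos η, ξ sin η) is injective on (a,R) × (0,π) provided 0 < a < R and 0 ≤ c_I < R - a. -/

import Mathlib

/-!
In polar coordinates `(x, y) = (ξ cos η, ξ sin η)`, which are injective on the upper half-plane,
the map becomes the shear `(x, y) ↦ (x + k (√(x² + y²) - a), y)` with `k = c_I / (R - a)`.
On each horizontal line this is the identity plus a `|k|`-Lipschitz perturbation, and `|k| < 1`.
-/

open Real Set Function

theorem injective_add_of_lipschitzWith_lt_one {E : Type*} [NormedAddCommGroup E] {K : NNReal}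
    {f : E → E} (hf : LipschitzWith K f) (hK : K < 1) : Injective fun x => x + f x :=
  (AntilipschitzWith.id.add_lipschitzWith hf (by simpa using hK)).injective

theorem lipschitzWith_one_sqrt_sq_add_sq (y : ℝ) :
    LipschitzWith 1 fun x : ℝ => √(x ^ 2 + y ^ 2) := by
  have : LipschitzWith 1 fun x : ℝ => (x : ℂ) + y * Complex.I := by
    simpa using Complex.isometry_ofReal.lipschitz.add (LipschitzWith.const (y * Complex.I))
  simpa only [comp_def, Complex.norm_add_mul_I, one_mul] using lipschitzWith_one_norm.comp this

theorem injective_sqrt_shear {k : ℝ} (hk : |k| < 1) (a : ℝ) :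
    Injective fun q : ℝ × ℝ => (k * (√(q.1 ^ 2 + q.2 ^ 2) - a) + q.1, q.2) := by
  rintro ⟨x, y⟩ ⟨x', y'⟩ h
  obtain ⟨hx, rfl⟩ := Prod.mk.inj h
  have hlip : LipschitzWith ‖k‖₊ fun x : ℝ => k * (√(x ^ 2 + y ^ 2) - a) := by
    simpa [comp_def] using (lipschitzWith_smul k).comp
      ((lipschitzWith_one_sqrt_sq_add_sq y).sub (LipschitzWith.const a))
  have hinj := injective_add_of_lipschitzWith_lt_one hlip (by simpa [← NNReal.coe_lt_coe] using hk)
  exact Prod.ext (hinj (by simpa only [add_comm] using hx)) rfl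

theorem stmt_19 (a R cI : ℝ) (ha : 0 < a) (haR : a < R)
    (hc0 : 0 ≤ cI) (hc : cI < R - a) :
    Set.InjOn
      (fun p : ℝ × ℝ =>
        (cI / (R - a) * (p.1 - a) + p.1 * Real.cos p.2, p.1 * Real.sin p.2))
      (Set.Ioo a R ×ˢ Set.Ioo (0 : ℝ) Real.pi) := by
  have hRa : 0 < R - a := sub_pos.2 haR
  have hk : |cI / (R - a)| < 1 := by
    rw [abs_of_nonneg (div_nonneg hc0 hRa.le)]
    exact (div_lt_one hRa).2 hc
  have hs : Ioo a R ×ˢ Ioo 0 π ⊆ polarCoord.target := fun p ⟨hξ, hη⟩ =>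
    ⟨ha.trans hξ.1, by linarith [pi_pos, hη.1], hη.2⟩
  refine ((injective_sqrt_shear hk a).comp_injOn (polarCoord.symm.injOn.mono hs)).congr ?_
  intro p hp
  have hr : √((polarCoord.symm p).1 ^ 2 + (polarCoord.symm p).2 ^ 2) = p.1 := by
    simpa using congrArg Prod.fst (polarCoord.right_inv (hs hp))
  simp only [comp_apply, hr]
  rfl
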